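/- arXiv:1412.5563 — 2 statements merged into one kernel-verified Lean document; each statement's English description precedes it below -/
import Mathlib

section
/- Let X be a compact metric space, F = ⋂ₖ AF_k nonempty and explicitly closed, and (xₙ) a sequence that is (G,H)-Fejér monotone with respect to F (where G has a G-modulus and H has an H-modulus) and has approximate F-points. Then (xₙ) converges to a point x ∈ F. -/
/-!
A compact space gives a subsequence of the approximate `F`-points converging to some `p`;
explicit closedness puts `p` in `F`. Then `p` is a cluster point of `(xₙ)`, and Fejér
monotonicity, read through the moduli `αG` and `βH`, says that once some `xₙ` is
`1/(αG (βH k) + 1)`-close to `p`, all later terms stay `1/(k + 1)`-close to `p`.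
-/

open Filter Topology

section

variable {X : Type*} [PseudoMetricSpace X]

lemma nndist_le_inv_succ_iff (a b : X) (k : ℕ) :
    nndist a b ≤ ((k : NNReal) + 1)⁻¹ ↔ dist a b ≤ ((k : ℝ) + 1)⁻¹ := by
  rw [← NNReal.coe_le_coe, NNReal.coe_inv, NNReal.coe_add, NNReal.coe_natCast,
    NNReal.coe_one, coe_nndist]

lemma mem_iInter_of_tendsto_of_eventually_mem {AF : ℕ → Set X}
    (hclosed : ∀ p : X,
      (∀ N M : ℕ, (AF M ∩ Metric.closedBall p (1 / (N + 1))).Nonempty) → p ∈ ⋂ k, AF k)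
    {y : ℕ → X} {p : X} (hy : Tendsto y atTop (𝓝 p)) (hmem : ∀ M, ∀ᶠ j in atTop, y j ∈ AF M) :
    p ∈ ⋂ k, AF k :=
  hclosed p fun N M =>
    let ⟨j, hj⟩ := ((hmem M).and (hy.eventually
      (Metric.closedBall_mem_nhds p (by positivity : (0 : ℝ) < 1 / (N + 1))))).exists
    ⟨y j, hj⟩

lemma tendsto_of_fejer_of_mem_closure_range {G H : NNReal → NNReal} {αG βH : ℕ → ℕ}
    (hαG : ∀ k : ℕ, ∀ a : NNReal, a ≤ ((αG k : NNReal) + 1)⁻¹ → G a ≤ ((k : NNReal) + 1)⁻¹)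
    (hβH : ∀ k : ℕ, ∀ a : NNReal, H a ≤ ((βH k : NNReal) + 1)⁻¹ → a ≤ ((k : NNReal) + 1)⁻¹)
    {x : ℕ → X} {p : X} (hfejer : ∀ n m : ℕ, H (nndist (x (n + m)) p) ≤ G (nndist (x n) p))
    (hp : p ∈ closure (Set.range x)) :
    Tendsto x atTop (𝓝 p) := by
  rw [Metric.tendsto_atTop]
  intro ε hε
  obtain ⟨k, hk⟩ := exists_nat_one_div_lt hε
  obtain ⟨n₀, hn₀⟩ := Metric.mem_closure_range_iff.mp hp _
    (by positivity : (0 : ℝ) < ((αG (βH k) : ℝ) + 1)⁻¹)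
  have hclose : nndist (x n₀) p ≤ ((αG (βH k) : NNReal) + 1)⁻¹ := by
    rw [nndist_le_inv_succ_iff, dist_comm]
    exact hn₀.le
  refine ⟨n₀, fun m hm => ?_⟩
  obtain ⟨d, rfl⟩ := Nat.exists_eq_add_of_le hm
  have hfar : nndist (x (n₀ + d)) p ≤ ((k : NNReal) + 1)⁻¹ :=
    hβH k _ ((hfejer n₀ d).trans (hαG _ _ hclose))
  calc dist (x (n₀ + d)) p ≤ ((k : ℝ) + 1)⁻¹ := (nndist_le_inv_succ_iff _ _ _).mp hfar
    _ < ε := by rwa [one_div] at hk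
end

theorem stmt9_general {X : Type*} [MetricSpace X] [CompactSpace X]
    (AF : ℕ → Set X) (hmono : Antitone AF)
    (hclosed : ∀ p : X,
      (∀ N M : ℕ, (AF M ∩ Metric.closedBall p (1 / (N + 1))).Nonempty) → p ∈ ⋂ k, AF k)
    (G H : NNReal → NNReal) (αG βH : ℕ → ℕ)
    (hαG : ∀ k : ℕ, ∀ a : NNReal, a ≤ ((αG k : NNReal) + 1)⁻¹ → G a ≤ ((k : NNReal) + 1)⁻¹)
    (hβH : ∀ k : ℕ, ∀ a : NNReal, H a ≤ ((βH k : NNReal) + 1)⁻¹ → a ≤ ((k : NNReal) + 1)⁻¹)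
    (x : ℕ → X)
    (hfejer : ∀ n m : ℕ, ∀ p ∈ ⋂ k, AF k, H (nndist (x (n + m)) p) ≤ G (nndist (x n) p))
    (happrox : ∀ k : ℕ, ∃ n : ℕ, x n ∈ AF k) :
    ∃ p ∈ ⋂ k, AF k, Filter.Tendsto x Filter.atTop (nhds p) := by
  choose n hn using happrox
  obtain ⟨p, -, φ, hφ, hconv⟩ :=
    isCompact_univ.tendsto_subseq (x := fun k => x (n k)) (fun k => Set.mem_univ _)
  have hpF : p ∈ ⋂ k, AF k :=
    mem_iInter_of_tendsto_of_eventually_mem hclosed hconv fun M =>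
      (eventually_ge_atTop M).mono fun j hj => hmono (hj.trans hφ.le_apply) (hn _)
  have hp : p ∈ closure (Set.range x) :=
    mem_closure_of_tendsto hconv (Eventually.of_forall fun j => Set.mem_range_self _)
  exact ⟨p, hpF, tendsto_of_fejer_of_mem_closure_range hαG hβH (fun n m => hfejer n m p hpF) hp⟩

theorem stmt9 {X : Type*} [MetricSpace X] [CompactSpace X]
    (AF : ℕ → Set X) (hmono : Antitone AF) (hne : (⋂ k, AF k).Nonempty)
    (hclosed : ∀ p : X,
      (∀ N M : ℕ, (AF M ∩ Metric.closedBall p (1 / (N + 1))).Nonempty) → p ∈ ⋂ k, AF k)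
    (G H : NNReal → NNReal) (αG βH : ℕ → ℕ)
    (hαG : ∀ k : ℕ, ∀ a : NNReal, a ≤ ((αG k : NNReal) + 1)⁻¹ → G a ≤ ((k : NNReal) + 1)⁻¹)
    (hβH : ∀ k : ℕ, ∀ a : NNReal, H a ≤ ((βH k : NNReal) + 1)⁻¹ → a ≤ ((k : NNReal) + 1)⁻¹)
    (x : ℕ → X)
    (hfejer : ∀ n m : ℕ, ∀ p ∈ ⋂ k, AF k, H (nndist (x (n + m)) p) ≤ G (nndist (x n) p))
    (happrox : ∀ k : ℕ, ∃ n : ℕ, x n ∈ AF k) :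
    ∃ p ∈ ⋂ k, AF k, Filter.Tendsto x Filter.atTop (nhds p) :=
  stmt9_general AF hmono hclosed G H αG βH hαG hβH x hfejer happrox
end

section
/- Let T : C → C satisfy condition (E_μ) for some μ ≥ 1 on a convex subset C of a W-hyperbolic space, and let (xₙ) be the Mann iteration x_{n+1} = (1−λₙ)xₙ ⊕ λₙTxₙ with λₙ ∈ [1/L, 1−1/L] for some L ≥ 2. Then for all n,m ∈ ℕ and p ∈ C: d(x_{n+m}, p) ≤ d(xₙ, p) + μ·m·(1 − 1/L)·d(p, Tp). -/
/-!
Convexity (W1) with base point `p`, combined with condition (E) at the pair `(p, xₙ)`, gives the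
one-step estimate `d(xₙ₊₁, p) ≤ d(xₙ, p) + λₙ μ d(p, Tp)`; with `λₙ ≤ 1 - 1/L` these steps add up
over `m` iterations.
-/

open Set

lemma le_add_mul_of_forall_le_add_succ {a : ℕ → ℝ} {c : ℝ} (h : ∀ k, a (k + 1) ≤ a k + c)
    (n m : ℕ) : a (n + m) ≤ a n + m * c := by
  induction m with
  | zero => simp
  | succ m ih =>
    rw [← add_assoc]
    push_cast
    linarith [h (n + m)]

section Mann

variable {X : Type*} {W : X → X → ℝ → X} {T : X → X}

lemma mann_iterate_mem {C : Set X} (hCconv : ∀ x ∈ C, ∀ y ∈ C, ∀ l ∈ Icc (0:ℝ) 1, W x y l ∈ C)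
    (hT : ∀ x ∈ C, T x ∈ C) {lam : ℕ → ℝ} (hlam : ∀ n, lam n ∈ Icc (0:ℝ) 1) {x : ℕ → X}
    (hx0 : x 0 ∈ C) (hxs : ∀ n, x (n + 1) = W (x n) (T (x n)) (lam n)) :
    ∀ n, x n ∈ C
  | 0 => hx0
  | n + 1 => by
    have hxn := mann_iterate_mem hCconv hT hlam hx0 hxs n
    rw [hxs n]
    exact hCconv _ hxn _ (hT _ hxn) _ (hlam n)

lemma dist_mann_step_le [MetricSpace X]
    (W1 : ∀ x y z : X, ∀ l ∈ Icc (0:ℝ) 1, dist z (W x y l) ≤ (1 - l) * dist z x + l * dist z y)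
    {μ : ℝ} {p y : X} (hE : dist p (T y) ≤ μ * dist (T p) p + dist p y)
    {l : ℝ} (hl : l ∈ Icc (0:ℝ) 1) :
    dist (W y (T y) l) p ≤ dist y p + l * μ * dist p (T p) := by
  rw [dist_comm _ p, dist_comm y p, dist_comm p (T p)]
  calc dist p (W y (T y) l)
      ≤ (1 - l) * dist p y + l * dist p (T y) := W1 _ _ _ _ hl
    _ ≤ (1 - l) * dist p y + l * (μ * dist (T p) p + dist p y) := by gcongr; exact hl.1
    _ = dist p y + l * μ * dist (T p) p := by ring

end Mann

theorem stmt15_general {X : Type*} [MetricSpace X] (W : X → X → ℝ → X)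
    (W1 : ∀ x y z : X, ∀ l ∈ Set.Icc (0:ℝ) 1,
      dist z (W x y l) ≤ (1 - l) * dist z x + l * dist z y)
    (C : Set X)
    (hCconv : ∀ x ∈ C, ∀ y ∈ C, ∀ l ∈ Set.Icc (0:ℝ) 1, W x y l ∈ C)
    (T : X → X) (hT : ∀ x ∈ C, T x ∈ C)
    (μ : ℝ) (hμ : 1 ≤ μ)
    (hE : ∀ x ∈ C, ∀ y ∈ C, dist x (T y) ≤ μ * dist (T x) x + dist x y)
    (L : ℝ) (hL : 2 ≤ L)
    (lam : ℕ → ℝ) (hlam : ∀ n, lam n ∈ Set.Icc (1 / L) (1 - 1 / L))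
    (x0 : X) (hx0 : x0 ∈ C) (x : ℕ → X) (hx : x 0 = x0)
    (hxs : ∀ n, x (n + 1) = W (x n) (T (x n)) (lam n)) :
    ∀ n m : ℕ, ∀ p ∈ C,
      dist (x (n + m)) p ≤ dist (x n) p + μ * m * (1 - 1 / L) * dist p (T p) := by
  intro n m p hp
  have hL' : 0 ≤ 1 / L := by positivity
  have hlam01 : ∀ k, lam k ∈ Icc (0:ℝ) 1 := fun k =>
    Icc_subset_Icc hL' (by linarith) (hlam k)
  have hxC := mann_iterate_mem hCconv hT hlam01 (hx ▸ hx0) hxs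
  have hstep : ∀ k, dist (x (k + 1)) p ≤ dist (x k) p + μ * (1 - 1 / L) * dist p (T p) := by
    intro k
    rw [hxs k]
    calc dist (W (x k) (T (x k)) (lam k)) p
        ≤ dist (x k) p + lam k * μ * dist p (T p) :=
          dist_mann_step_le W1 (hE p hp _ (hxC k)) (hlam01 k)
      _ ≤ dist (x k) p + (1 - 1 / L) * μ * dist p (T p) := by
          gcongr
          exact (hlam k).2
      _ = dist (x k) p + μ * (1 - 1 / L) * dist p (T p) := by ring
  linarith [le_add_mul_of_forall_le_add_succ (a := fun k => dist (x k) p) hstep n m]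

theorem stmt15 {X : Type*} [MetricSpace X] (W : X → X → ℝ → X)
    (W1 : ∀ x y z : X, ∀ l ∈ Set.Icc (0:ℝ) 1,
      dist z (W x y l) ≤ (1 - l) * dist z x + l * dist z y)
    (W2 : ∀ x y : X, ∀ l ∈ Set.Icc (0:ℝ) 1, ∀ l' ∈ Set.Icc (0:ℝ) 1,
      dist (W x y l) (W x y l') = |l - l'| * dist x y)
    (W3 : ∀ x y : X, ∀ l ∈ Set.Icc (0:ℝ) 1, W x y l = W y x (1 - l))
    (W4 : ∀ x y z w : X, ∀ l ∈ Set.Icc (0:ℝ) 1,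
      dist (W x z l) (W y w l) ≤ (1 - l) * dist x y + l * dist z w)
    (C : Set X)
    (hCconv : ∀ x ∈ C, ∀ y ∈ C, ∀ l ∈ Set.Icc (0:ℝ) 1, W x y l ∈ C)
    (T : X → X) (hT : ∀ x ∈ C, T x ∈ C)
    (μ : ℝ) (hμ : 1 ≤ μ)
    (hE : ∀ x ∈ C, ∀ y ∈ C, dist x (T y) ≤ μ * dist (T x) x + dist x y)
    (L : ℝ) (hL : 2 ≤ L)
    (lam : ℕ → ℝ) (hlam : ∀ n, lam n ∈ Set.Icc (1 / L) (1 - 1 / L))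
    (x0 : X) (hx0 : x0 ∈ C) (x : ℕ → X) (hx : x 0 = x0)
    (hxs : ∀ n, x (n + 1) = W (x n) (T (x n)) (lam n)) :
    ∀ n m : ℕ, ∀ p ∈ C,
      dist (x (n + m)) p ≤ dist (x n) p + μ * m * (1 - 1 / L) * dist p (T p) :=
  stmt15_general W W1 C hCconv T hT μ hμ hE L hL lam hlam x0 hx0 x hx hxs
end
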